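/- Let p(x) = x^{−2} e^{−1/x} for x > 0 denote the InverseGamma(1,1) density and let m be a nonnegative integer. Then ∫₀^∞ ∫₀^∞ { Γ(0.5δ + 0.5) / (Γ(0.5δ) √δ σ) }^{m} p(σ) p(δ) dσ dδ < ∞. -/

import Mathlib

/-!
Log-convexity of `Γ` gives `Γ(x + 1/2) ≤ √x Γ(x)`, so the Student-t constant
`Γ(δ/2 + 1/2) / (Γ(δ/2) √δ)` is at most `1`. The integrand is then dominated by
`p(δ) · σ^(-m-2) e^(-1/σ)`, a product of two functions integrable on `(0, ∞)`: the substitution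
`σ ↦ 1/σ` turns each of them into an Euler integrand of `Γ`.
-/

open MeasureTheory

/-- The InverseGamma(1,1) density. -/
noncomputable def invGamma11 (x : ℝ) : ℝ := x ^ (-2 : ℝ) * Real.exp (-1 / x)

open Set Real
open scoped ENNReal

theorem Real.Gamma_add_half_le_sqrt_mul_Gamma {x : ℝ} (hx : 0 < x) :
    Gamma (x + 1 / 2) ≤ √x * Gamma x := by
  have hΓ := (Gamma_pos_of_pos hx).le
  have h := Gamma_mul_add_mul_le_rpow_Gamma_mul_rpow_Gamma hx (by linarith : 0 < x + 1)
    one_half_pos one_half_pos (add_halves 1)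
  rw [Gamma_add_one hx.ne', ← sqrt_eq_rpow, ← sqrt_eq_rpow, sqrt_mul hx.le,
    mul_left_comm, mul_self_sqrt hΓ] at h
  convert h using 2
  ring

theorem Gamma_half_add_half_le_Gamma_half_mul_sqrt {δ : ℝ} (hδ : 0 < δ) :
    Gamma (0.5 * δ + 0.5) ≤ Gamma (0.5 * δ) * √δ := by
  have hx : 0 < 0.5 * δ := by positivity
  calc Gamma (0.5 * δ + 0.5) = Gamma (0.5 * δ + 1 / 2) := by norm_num
    _ ≤ √(0.5 * δ) * Gamma (0.5 * δ) := Gamma_add_half_le_sqrt_mul_Gamma hx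
    _ ≤ Gamma (0.5 * δ) * √δ := by
      rw [mul_comm]
      gcongr
      linarith

theorem integrableOn_rpow_neg_mul_exp_neg_inv {a : ℝ} (ha : 0 < a) :
    IntegrableOn (fun x : ℝ => x ^ (-a - 1) * exp (-1 / x)) (Ioi 0) := by
  have hGamma := (integrableOn_Ioi_comp_rpow_iff' (fun y : ℝ => exp (-y) * y ^ (a - 1))
    (neg_ne_zero.2 one_ne_zero)).2 (GammaIntegral_convergent ha)
  refine hGamma.congr_fun (fun x hx => ?_) measurableSet_Ioi
  have hx : 0 < x := hx
  simp only [smul_eq_mul, rpow_neg_one]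
  rw [inv_rpow hx.le, ← rpow_neg hx.le, mul_left_comm, ← rpow_add hx, neg_div, one_div]
  ring_nf

theorem lintegral_lintegral_ofReal_lt_top_of_le_mul {α β : Type*} [MeasurableSpace α]
    [MeasurableSpace β] {μ : Measure α} {ν : Measure β} {F : α → β → ℝ} {f : α → ℝ}
    {g : β → ℝ} (hf : Integrable f μ) (hg : Integrable g ν)
    (hF : ∀ᵐ x ∂μ, ∀ᵐ y ∂ν, F x y ≤ f x * g y) :
    ∫⁻ x, ∫⁻ y, ENNReal.ofReal (F x y) ∂ν ∂μ < ∞ := by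
  have hle : ∀ᵐ x ∂μ, ∫⁻ y, ENNReal.ofReal (F x y) ∂ν ≤ ‖f x‖ₑ * ∫⁻ y, ‖g y‖ₑ ∂ν := by
    filter_upwards [hF] with x hx
    rw [← lintegral_const_mul' _ _ enorm_ne_top]
    refine lintegral_mono_ae (hx.mono fun y hy => ?_)
    rw [← enorm_mul, ← ofReal_norm]
    exact ENNReal.ofReal_le_ofReal (hy.trans (le_abs_self _))
  calc _ ≤ ∫⁻ x, ‖f x‖ₑ * ∫⁻ y, ‖g y‖ₑ ∂ν ∂μ := lintegral_mono_ae hle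
    _ = (∫⁻ x, ‖f x‖ₑ ∂μ) * ∫⁻ y, ‖g y‖ₑ ∂ν := lintegral_mul_const' _ _ hg.2.ne
    _ < ∞ := ENNReal.mul_lt_top hf.2 hg.2

theorem invGamma11_nonneg {x : ℝ} (hx : 0 ≤ x) : 0 ≤ invGamma11 x := by
  unfold invGamma11
  positivity

theorem div_pow_mul_invGamma11_le {r σ : ℝ} (hr₀ : 0 ≤ r) (hr₁ : r ≤ 1) (hσ : 0 < σ) (m : ℕ) :
    (r / σ) ^ m * invGamma11 σ ≤ σ ^ (-(m + 1 : ℝ) - 1) * exp (-1 / σ) := by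
  calc (r / σ) ^ m * invGamma11 σ ≤ (σ ^ (-1 : ℝ)) ^ m * invGamma11 σ := by
        rw [rpow_neg_one, ← one_div]
        gcongr
        exact invGamma11_nonneg hσ.le
    _ = σ ^ (-(m + 1 : ℝ) - 1) * exp (-1 / σ) := by
        rw [invGamma11, ← rpow_mul_natCast hσ.le, ← mul_assoc, ← rpow_add hσ]
        ring_nf

/-- Finiteness of the Student-t normalizing-constant integral against
InverseGamma(1,1) priors. -/
theorem student_t_const_inverse_gamma_integral_finite (m : ℕ) :
    ∫⁻ δ in Set.Ioi (0:ℝ), ∫⁻ σ in Set.Ioi (0:ℝ),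
      ENNReal.ofReal
        ((Real.Gamma (0.5 * δ + 0.5) / (Real.Gamma (0.5 * δ) * Real.sqrt δ * σ)) ^ m *
          invGamma11 σ * invGamma11 δ) < ⊤ := by
  refine lintegral_lintegral_ofReal_lt_top_of_le_mul (f := invGamma11)
    (g := fun σ => σ ^ (-(m + 1 : ℝ) - 1) * exp (-1 / σ)) ?_
    (integrableOn_rpow_neg_mul_exp_neg_inv (by positivity)) ?_
  · refine (integrableOn_rpow_neg_mul_exp_neg_inv one_pos).congr_fun (fun x _ => ?_)
      measurableSet_Ioi
    norm_num [invGamma11]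
  filter_upwards [self_mem_ae_restrict measurableSet_Ioi] with δ (hδ : 0 < δ)
  filter_upwards [self_mem_ae_restrict measurableSet_Ioi] with σ (hσ : 0 < σ)
  have hratio : Gamma (0.5 * δ + 0.5) / (Gamma (0.5 * δ) * √δ) ≤ 1 :=
    div_le_one_of_le₀ (Gamma_half_add_half_le_Gamma_half_mul_sqrt hδ) (by positivity)
  rw [mul_comm (invGamma11 δ), div_mul_eq_div_div]
  exact mul_le_mul_of_nonneg_right (div_pow_mul_invGamma11_le (by positivity) hratio hσ m)
    (invGamma11_nonneg hδ.le)
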